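/- arXiv:1801.08122 — 2 statements merged into one kernel-verified Lean document; each statement's English description precedes it below -/
import Mathlib

section
/- Let A be a (not necessarily self-adjoint) operator whose principal eigenvalue λ₁(ε) for the problem -dΔψ + ηψ - (K+ε)Bψ = λψ with Neumann boundary conditions exists for each ε ≥ 0 with positive eigenfunction. Then the map ε ↦ λ₁(ε) is monotone nonincreasing: if 0 ≤ ε₁ < ε₂ then λ₁(ε₂) ≤ λ₁(ε₁). -/
open MeasureTheory RealInnerProductSpace

/-!
Take the eigenfunction `ψ` of `T ε₂` and the adjoint eigenfunction `ψ̃` of `T ε₁`, and pair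
`T ε₁ ψ = λ₁(ε₂) ψ + (ε₂ - ε₁) B ψ` with `ψ̃`. Adjointness gives
`λ₁(ε₁) ⟪ψ, ψ̃⟫ = λ₁(ε₂) ⟪ψ, ψ̃⟫ + (ε₂ - ε₁) ⟪B ψ, ψ̃⟫`. Positivity of `ψ, ψ̃` and of `B` makes
`⟪ψ, ψ̃⟫ > 0` and `⟪B ψ, ψ̃⟫ ≥ 0`, hence `λ₁(ε₂) ≤ λ₁(ε₁)`.
-/

section InnerProductSpace

variable {E : Type*} [NormedAddCommGroup E] [InnerProductSpace ℝ E]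

lemma eigenvalue_le_of_adjoint_eigenvector {T S : E → E} {u v w : E} {a b : ℝ}
    (hadj : ⟪T u, v⟫ = ⟪u, S v⟫) (hTu : T u = a • u + w) (hSv : S v = b • v)
    (huv : 0 < ⟪u, v⟫) (hwv : 0 ≤ ⟪w, v⟫) : a ≤ b := by
  have key : a * ⟪u, v⟫ + ⟪w, v⟫ = b * ⟪u, v⟫ := by
    rw [← real_inner_smul_left, ← inner_add_left, ← hTu, hadj, hSv, real_inner_smul_right]
  exact le_of_mul_le_mul_right (by linarith) huv

end InnerProductSpace

namespace MeasureTheory.L2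

variable {α : Type*} [MeasurableSpace α] {μ : Measure α}

lemma inner_eq_integral_mul (f g : Lp ℝ 2 μ) : ⟪f, g⟫ = ∫ x, f x * g x ∂μ := by
  simp only [inner_def, RCLike.inner_apply, conj_trivial, mul_comm]

lemma inner_nonneg_of_ae_nonneg {f g : Lp ℝ 2 μ} (hf : ∀ᵐ x ∂μ, 0 ≤ f x)
    (hg : ∀ᵐ x ∂μ, 0 ≤ g x) : 0 ≤ ⟪f, g⟫ := by
  rw [inner_eq_integral_mul]
  exact integral_nonneg_of_ae (by filter_upwards [hf, hg] with x using mul_nonneg)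

lemma inner_pos_of_ae_pos (hμ : μ ≠ 0) {f g : Lp ℝ 2 μ} (hf : ∀ᵐ x ∂μ, 0 < f x)
    (hg : ∀ᵐ x ∂μ, 0 < g x) : 0 < ⟪f, g⟫ := by
  have hfg : ∀ᵐ x ∂μ, 0 < f x * g x := by filter_upwards [hf, hg] with x using mul_pos
  have hint : Integrable (fun x => f x * g x) μ := by
    simpa only [RCLike.inner_apply, conj_trivial, mul_comm] using integrable_inner (𝕜 := ℝ) f g
  rw [inner_eq_integral_mul, integral_pos_iff_support_of_nonneg_ae (hfg.mono fun _ => le_of_lt) hint]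
  calc 0 < μ Set.univ := Measure.measure_univ_pos.2 hμ
    _ ≤ μ (Function.support fun x => f x * g x) :=
      measure_mono_ae (hfg.mono fun _ hx _ => hx.ne')

end MeasureTheory.L2

/-- Monotonicity of the principal eigenvalue in `ε` for the (non-selfadjoint) Neumann
problem `-dΔψ + ηψ - (K+ε)Bψ = λψ`.  The elliptic Neumann operator `-dΔ + η` is
represented by the linear map `A₀` on `L²(Ω)`, multiplication by `K` by `MK`, and the
adjoint problem by the family `S ε`, adjoint to `T ε := A₀ - MK∘B - ε B` with respect to
the `L²` inner product.  If for every `ε ≥ 0` both the problem and its adjoint admit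
a.e.-positive eigenfunctions with eigenvalue `λ₁(ε)`, and `B` is positivity preserving,
then `ε ↦ λ₁(ε)` is nonincreasing: `0 ≤ ε₁ < ε₂` implies `λ₁(ε₂) ≤ λ₁(ε₁)`. -/
theorem principal_eigenvalue_antitone
    {α : Type*} [MeasurableSpace α] (μ : Measure α) (hμ : μ ≠ 0)
    (A₀ : Lp ℝ 2 μ →ₗ[ℝ] Lp ℝ 2 μ)          -- the Neumann realization of `-dΔ + η`
    (MK B : Lp ℝ 2 μ →L[ℝ] Lp ℝ 2 μ)         -- multiplication by `K`, and the operator `B`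
    (hBpos : ∀ f : Lp ℝ 2 μ, (∀ᵐ x ∂μ, 0 ≤ f x) → ∀ᵐ x ∂μ, 0 ≤ B f x)
    (T S : ℝ → (Lp ℝ 2 μ →ₗ[ℝ] Lp ℝ 2 μ))
    (hT : ∀ ε u, T ε u = A₀ u - MK (B u) - ε • B u)
    (hadj : ∀ ε u v, ⟪T ε u, v⟫ = ⟪u, S ε v⟫)  -- `S ε` is the adjoint problem operator
    (lam1 : ℝ → ℝ) (ψ ψt : ℝ → Lp ℝ 2 μ)
    (heig : ∀ ε, 0 ≤ ε → (∀ᵐ x ∂μ, 0 < ψ ε x) ∧ T ε (ψ ε) = lam1 ε • ψ ε)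
    (heigadj : ∀ ε, 0 ≤ ε → (∀ᵐ x ∂μ, 0 < ψt ε x) ∧ S ε (ψt ε) = lam1 ε • ψt ε) :
    ∀ ε₁ ε₂ : ℝ, 0 ≤ ε₁ → ε₁ < ε₂ → lam1 ε₂ ≤ lam1 ε₁ := by
  intro ε₁ ε₂ hε₁ hε₁₂
  obtain ⟨hψ_pos, hψ_eig⟩ := heig ε₂ (hε₁.trans hε₁₂.le)
  obtain ⟨hψt_pos, hψt_eig⟩ := heigadj ε₁ hε₁
  have hperturb : T ε₁ (ψ ε₂) = lam1 ε₂ • ψ ε₂ + (ε₂ - ε₁) • B (ψ ε₂) := by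
    rw [← hψ_eig, hT, hT]; module
  have hBψ_nonneg : 0 ≤ ⟪(ε₂ - ε₁) • B (ψ ε₂), ψt ε₁⟫ := by
    rw [real_inner_smul_left]
    exact mul_nonneg (sub_nonneg.2 hε₁₂.le) <| L2.inner_nonneg_of_ae_nonneg
      (hBpos _ (hψ_pos.mono fun _ => le_of_lt)) (hψt_pos.mono fun _ => le_of_lt)
  exact eigenvalue_le_of_adjoint_eigenvector (hadj ε₁ _ _) hperturb hψt_eig
    (L2.inner_pos_of_ae_pos hμ hψ_pos hψt_pos) hBψ_nonneg
end

section
/- Let T : X → X be a compact positive operator on X = L^∞(Ω) such that for every nonzero f ≥ 0, T f is continuous on Ω̄ and bounded below by a positive constant. If λ ≠ r(T) is an eigenvalue of T with eigenvector w, then w cannot satisfy w ≥ 0 a.e. and w ≠ 0 (no eigenvalue other than the spectral radius has a nonnegative nonzero eigenvector). -/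
/-!
The eigenvector `T w = λ w` lies in the interior of the cone, so it is an order unit:
`|u| ≤ c ‖u‖ • T w` for every `u`. Since `T` is positive, `|Tⁿ u| ≤ c ‖u‖ λⁿ • T w`, and the
solidity of the norm turns this into `‖Tⁿ‖ ≤ C λⁿ`, whence `r(T) ≤ λ`. Conversely `λ` is an
eigenvalue, so `λ ≤ r(T)`.
-/

open MeasureTheory Filter
open scoped ENNReal NNReal

namespace MeasureTheory.Lp

variable {α E 𝕜 : Type*} [MeasurableSpace α] {μ : Measure α} {p : ℝ≥0∞}
  [NormedAddCommGroup E] [PartialOrder E] [NormedRing 𝕜] [PartialOrder 𝕜] [Module 𝕜 E]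
  [IsBoundedSMul 𝕜 E] [PosSMulMono 𝕜 E]

instance instPosSMulMono : PosSMulMono 𝕜 (Lp E p μ) where
  smul_le_smul_of_nonneg_left c hc f g hfg := by
    rw [← Lp.coeFn_le] at hfg ⊢
    filter_upwards [hfg, Lp.coeFn_smul c f, Lp.coeFn_smul c g] with a ha hcf hcg
    simpa only [hcf, hcg, Pi.smul_apply] using smul_le_smul_of_nonneg_left ha hc

end MeasureTheory.Lp

namespace spectrum

variable {𝕜 A : Type*} [NontriviallyNormedField 𝕜] [NormedRing A] [NormedAlgebra 𝕜 A]
  [CompleteSpace A]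

theorem spectralRadius_le_of_norm_pow_le {a : A} {C r : ℝ} (hr : 0 ≤ r)
    (h : ∀ n : ℕ, ‖a ^ n‖ ≤ C * r ^ n) : spectralRadius 𝕜 a ≤ ENNReal.ofReal r := by
  set K : ℝ≥0∞ := ENNReal.ofReal C
  refine ENNReal.le_of_forall_lt_one_mul_le fun ε hε => ?_
  rcases eq_or_ne ε 0 with rfl | hε0
  · simp
  rw [ENNReal.mul_le_iff_le_inv hε0 (hε.trans_le le_top).ne]
  have hδ : 1 < ε⁻¹ := ENNReal.one_lt_inv.2 hε
  refine (spectralRadius_le_liminf_pow_nnnorm_pow_one_div 𝕜 a).trans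
    (liminf_le_of_frequently_le' (Eventually.frequently ?_))
  filter_upwards [ENNReal.eventually_pow_one_div_le (x := K) ENNReal.ofReal_ne_top hδ,
    eventually_ne_atTop 0] with n hK hn
  have hpow : (‖a ^ n‖₊ : ℝ≥0∞) ≤ K * ENNReal.ofReal r ^ n := by
    rw [← ENNReal.ofReal_coe_nnreal, coe_nnnorm, ← ENNReal.ofReal_pow hr,
      ← ENNReal.ofReal_mul' (pow_nonneg hr n)]
    exact ENNReal.ofReal_le_ofReal (h n)
  calc (‖a ^ n‖₊ : ℝ≥0∞) ^ (1 / n : ℝ)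
      ≤ (K * ENNReal.ofReal r ^ n) ^ (1 / n : ℝ) := ENNReal.rpow_le_rpow hpow (by positivity)
    _ = K ^ (1 / n : ℝ) * ENNReal.ofReal r := by
      rw [ENNReal.mul_rpow_of_nonneg _ _ (by positivity), ← ENNReal.rpow_natCast,
        ← ENNReal.rpow_mul, mul_one_div_cancel (by exact_mod_cast hn), ENNReal.rpow_one]
    _ ≤ ε⁻¹ * ENNReal.ofReal r := by gcongr

end spectrum

theorem ContinuousLinearMap.enorm_le_spectralRadius_of_apply_eq_smul {𝕜 E : Type*}
    [NontriviallyNormedField 𝕜] [NormedAddCommGroup E] [NormedSpace 𝕜 E] [CompleteSpace E]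
    {T : E →L[𝕜] E} {lam : 𝕜} {w : E} (hw : w ≠ 0) (hTw : T w = lam • w) :
    ‖lam‖ₑ ≤ spectralRadius 𝕜 T := by
  have hspec : lam ∈ spectrum 𝕜 T := by
    rw [ContinuousLinearMap.spectrum_eq]
    exact (Module.End.hasEigenvalue_of_hasEigenvector
      ⟨Module.End.mem_eigenspace_iff.2 hTw, hw⟩).mem_spectrum
  exact le_iSup₂ (f := fun k (_ : k ∈ spectrum 𝕜 T) => (‖k‖₊ : ℝ≥0∞)) lam hspec

section OrderedNormedSpace

variable {E : Type*} [NormedAddCommGroup E] [Lattice E] [IsOrderedAddMonoid E] [NormedSpace ℝ E]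

theorem abs_apply_le_of_monotone {T : E →L[ℝ] E} (hT : Monotone T) {u x : E} (hu : |u| ≤ x) :
    |T u| ≤ T x := by
  obtain ⟨hle, hge⟩ := abs_le'.1 hu
  exact abs_le'.2 ⟨hT hle, neg_le.1 (by simpa using hT (neg_le.1 hge))⟩

theorem abs_pow_apply_le_of_monotone {T : E →L[ℝ] E} (hT : Monotone T) {x : E} {lam : ℝ}
    (hTx : T x = lam • x) {u : E} (hu : |u| ≤ x) (n : ℕ) : |(T ^ n) u| ≤ lam ^ n • x := by
  induction n with
  | zero => simpa using hu
  | succ n ih =>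
    calc |(T ^ (n + 1)) u| = |T ((T ^ n) u)| := by rw [pow_succ']; rfl
      _ ≤ T (lam ^ n • x) := abs_apply_le_of_monotone hT ih
      _ = lam ^ (n + 1) • x := by rw [map_smul, hTx, smul_smul, pow_succ]

variable [PosSMulMono ℝ E]

theorem nonneg_of_smul_nonneg_of_ne_zero {a : ℝ} {x : E} (h : 0 ≤ a • x) (hx : 0 ≤ x)
    (hx0 : x ≠ 0) : 0 ≤ a := by
  by_contra! ha
  have hax : a • x ≤ 0 := by simpa using smul_nonneg (neg_nonneg.2 ha.le) hx
  rcases smul_eq_zero.1 (le_antisymm hax h) with rfl | rfl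
  exacts [lt_irrefl 0 ha, hx0 rfl]

theorem exists_abs_le_mul_norm_smul_of_mem_interior {x : E}
    (hx : x ∈ interior {v : E | 0 ≤ v}) : ∃ c ≥ 0, ∀ u : E, |u| ≤ (c * ‖u‖) • x := by
  obtain ⟨ε, hε, hball⟩ :=
    Metric.nhds_basis_closedBall.mem_iff.1 (mem_interior_iff_mem_nhds.1 hx)
  refine ⟨ε⁻¹, inv_nonneg.2 hε.le, fun u => ?_⟩
  rcases eq_or_ne u 0 with rfl | hu
  · simp
  set t := ε / ‖u‖
  have ht : 0 < t := by positivity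
  have hnorm : ‖t • u‖ = ε := by
    rw [norm_smul, Real.norm_of_nonneg ht.le, div_mul_cancel₀ _ (norm_ne_zero_iff.2 hu)]
  have hle : t • u ≤ x := sub_nonneg.1 <| hball <| by simp [hnorm]
  have hge : -(t • u) ≤ x := neg_le_iff_add_nonneg.2 <| hball <| by simp [hnorm]
  have hc : ε⁻¹ * ‖u‖ = t⁻¹ := by rw [inv_div, div_eq_inv_mul]
  rw [hc, abs_le', ← inv_smul_smul₀ ht.ne' u, ← smul_neg]
  exact ⟨smul_le_smul_of_nonneg_left hle (inv_nonneg.2 ht.le),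
    smul_le_smul_of_nonneg_left hge (inv_nonneg.2 ht.le)⟩

theorem exists_norm_pow_le_of_monotone_of_mem_interior [HasSolidNorm E] {T : E →L[ℝ] E}
    (hT : Monotone T) {x : E} (hx : x ∈ interior {v : E | 0 ≤ v}) {lam : ℝ} (hlam : 0 ≤ lam)
    (hTx : T x = lam • x) : ∃ C, ∀ n : ℕ, ‖T ^ n‖ ≤ C * lam ^ n := by
  obtain ⟨c, hc, hcx⟩ := exists_abs_le_mul_norm_smul_of_mem_interior hx
  refine ⟨c * ‖x‖, fun n => ContinuousLinearMap.opNorm_le_bound _ (by positivity) fun u => ?_⟩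
  set y := (c * ‖u‖) • x
  have hTy : T y = lam • y := by rw [map_smul, hTx, smul_comm]
  have hy : 0 ≤ lam ^ n • y :=
    smul_nonneg (pow_nonneg hlam n) (smul_nonneg (by positivity) (interior_subset hx))
  calc ‖(T ^ n) u‖ ≤ ‖lam ^ n • y‖ := norm_le_norm_of_abs_le_abs <| by
        rw [abs_of_nonneg hy]; exact abs_pow_apply_le_of_monotone hT hTy (hcx u) n
    _ = c * ‖x‖ * lam ^ n * ‖u‖ := by
      rw [norm_smul, norm_smul, Real.norm_of_nonneg (pow_nonneg hlam n),
        Real.norm_of_nonneg (by positivity)]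
      ring

end OrderedNormedSpace

theorem krein_rutman_uniqueness_general
    {α : Type*} [MeasurableSpace α] (μ : Measure α)
    (T : Lp ℝ ⊤ μ →L[ℝ] Lp ℝ ⊤ μ)
    (C : Set (Lp ℝ ⊤ μ)) (hC : C = {w : Lp ℝ ⊤ μ | 0 ≤ w})
    (hTpos : ∀ f ∈ C, f ≠ 0 → T f ∈ interior C)
    (lam : ℝ) (hlam : lam ≠ (spectralRadius ℝ T).toReal)
    (w : Lp ℝ ⊤ μ) (hw : T w = lam • w) :
    ¬(w ∈ C ∧ w ≠ 0) := by
  subst hC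
  rintro ⟨hw0, hwne⟩
  have hTnonneg : ∀ f, 0 ≤ f → 0 ≤ T f := fun f hf =>
    (eq_or_ne f 0).elim (fun h => by simp [h]) fun h =>
      interior_subset (s := {v : Lp ℝ ⊤ μ | 0 ≤ v}) (hTpos f hf h)
  have hT : Monotone T := (monotone_iff_map_nonneg T).2 hTnonneg
  have hlam0 : 0 ≤ lam := nonneg_of_smul_nonneg_of_ne_zero (hw ▸ hTnonneg w hw0) hw0 hwne
  -- `w` need not be an interior point of the cone, but the eigenvector `T w` is
  have hTTw : T (T w) = lam • T w := by rw [hw, map_smul, hw]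
  obtain ⟨K, hK⟩ :=
    exists_norm_pow_le_of_monotone_of_mem_interior hT (hTpos w hw0 hwne) hlam0 hTTw
  have hle : spectralRadius ℝ T ≤ ENNReal.ofReal lam :=
    spectrum.spectralRadius_le_of_norm_pow_le hlam0 hK
  have hge : ENNReal.ofReal lam ≤ spectralRadius ℝ T := by
    simpa [Real.enorm_eq_ofReal hlam0] using
      ContinuousLinearMap.enorm_le_spectralRadius_of_apply_eq_smul hwne hw
  exact hlam (by rw [le_antisymm hle hge, ENNReal.toReal_ofReal hlam0])

/-- Uniqueness part of the Krein–Rutman theorem on `X = L^∞(Ω)`: let `T` be a compact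
positive operator which is strictly positive in the sense that it maps every nonzero
`f ≥ 0` into the interior of the cone `C` of a.e.-nonnegative functions (for each
nonzero `f ≥ 0`, `Tf` is continuous on `Ω̄` and bounded below by a positive constant,
hence an interior point of `C`).  If `λ ≠ r(T)` is an eigenvalue of `T` with eigenvector
`w`, then `w` cannot be nonnegative a.e. and nonzero. -/
theorem krein_rutman_uniqueness
    {α : Type*} [MeasurableSpace α] (μ : Measure α)
    (T : Lp ℝ ⊤ μ →L[ℝ] Lp ℝ ⊤ μ) (hTcomp : IsCompactOperator T)
    (C : Set (Lp ℝ ⊤ μ)) (hC : C = {w : Lp ℝ ⊤ μ | 0 ≤ w})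
    (hsolid : (interior C).Nonempty)
    (hTpos : ∀ f ∈ C, f ≠ 0 → T f ∈ interior C)
    (lam : ℝ) (hlam : lam ≠ (spectralRadius ℝ T).toReal)
    (w : Lp ℝ ⊤ μ) (hw : T w = lam • w) :
    ¬(w ∈ C ∧ w ≠ 0) :=
  krein_rutman_uniqueness_general μ T C hC hTpos lam hlam w hw
end
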